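/- Let n ≥ 3 and m ≥ 2. Every spanning tree T of the cylindrical graph with sink G^s_{n,m} contains an s-rooted trunk: a simple path contained in T that passes through the sink vertex s and intersects every ring R_k, k = 0,…,m−1. -/

import Mathlib

open SimpleGraph

/-- Vertices of the cylindrical graph `G_{n,m}`: pairs `(i,j)` with `i ∈ ℤ_n`, `j ∈ {0,…,m-1}`. -/
abbrev CylV (n m : ℕ) := Fin n × Fin m

/-- Generating relation for the edges of the cylinder: ring edges and path edges. -/
def cylRel (n m : ℕ) (v w : CylV n m) : Prop :=
  (v.2 = w.2 ∧ (w.1 : ℕ) = ((v.1 : ℕ) + 1) % n) ∨ (v.1 = w.1 ∧ (w.2 : ℕ) = (v.2 : ℕ) + 1)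

/-- The cylindrical graph `G_{n,m} = C_n □ P_m`. -/
def cyl (n m : ℕ) : SimpleGraph (CylV n m) := SimpleGraph.fromRel (cylRel n m)

/-- Vertices of the cylindrical graph with sink: cylinder vertices plus the sink `none`. -/
abbrev CylSV (n m : ℕ) := Option (CylV n m)

/-- Generating relation for the cylinder with sink: cylinder edges, plus edges from the
sink to every vertex of the boundary rings `R_0` and `R_{m-1}`. -/
def cylSinkRel (n m : ℕ) : CylSV n m → CylSV n m → Prop
  | some a, some b => cylRel n m a b
  | none, some b => (b.2 : ℕ) = 0 ∨ (b.2 : ℕ) = m - 1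
  | _, none => False

/-- The cylindrical graph with sink `G^s_{n,m}`. -/
def cylSink (n m : ℕ) : SimpleGraph (CylSV n m) := SimpleGraph.fromRel (cylSinkRel n m)

/-- `T` is a spanning tree of `G`: a spanning subgraph which is a tree. -/
def IsSpanningTree {V : Type*} (G T : SimpleGraph V) : Prop := T ≤ G ∧ T.IsTree

/-- Probability, under the uniform measure on spanning trees of `G`, of the event `p`. -/
noncomputable def ustProb {V : Type*} (G : SimpleGraph V) (p : SimpleGraph V → Prop) : ℝ :=
  (Nat.card {T : SimpleGraph V // IsSpanningTree G T ∧ p T} : ℝ) /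
    (Nat.card {T : SimpleGraph V // IsSpanningTree G T} : ℝ)

/-- Conditional probability, under the uniform measure on spanning trees of `G`
restricted to trees satisfying `cond`, of the event `p`. -/
noncomputable def ustCondProb {V : Type*} (G : SimpleGraph V)
    (cond p : SimpleGraph V → Prop) : ℝ :=
  (Nat.card {T : SimpleGraph V // IsSpanningTree G T ∧ cond T ∧ p T} : ℝ) /
    (Nat.card {T : SimpleGraph V // IsSpanningTree G T ∧ cond T} : ℝ)

def rng {n m : ℕ} : Option (CylV n m) → ℕ
  | none => 0
  | some c => c.2.val

lemma adj_rng {n m : ℕ} {T : SimpleGraph (Option (CylV n m))} (hle : T ≤ cylSink n m)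
    {a b : CylV n m} (h : T.Adj (some a) (some b)) :
    a.2.val ≤ b.2.val + 1 ∧ b.2.val ≤ a.2.val + 1 := by
  have h' := hle h
  rw [cylSink, fromRel_adj] at h'
  obtain ⟨-, h1 | h1⟩ := h' <;> simp only [cylSinkRel, cylRel] at h1 <;>
    rcases h1 with ⟨h2, -⟩ | ⟨-, h2⟩ <;> first | (rw [h2]; omega) | omega

lemma adj_none {n m : ℕ} {T : SimpleGraph (Option (CylV n m))} (hle : T ≤ cylSink n m)
    {b : CylV n m} (h : T.Adj none (some b)) : b.2.val = 0 ∨ b.2.val = m - 1 := by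
  have h' := hle h
  rw [cylSink, fromRel_adj] at h'
  obtain ⟨-, h1 | h1⟩ := h'
  · exact h1
  · exact h1.elim

lemma ivt {n m : ℕ} {T : SimpleGraph (Option (CylV n m))} (hle : T ≤ cylSink n m) :
    ∀ {u v : Option (CylV n m)} (w : T.Walk u v), (none : Option (CylV n m)) ∉ w.support →
    ∀ k : ℕ, min (rng u) (rng v) ≤ k → k ≤ max (rng u) (rng v) →
    ∃ c : CylV n m, some c ∈ w.support ∧ c.2.val = k := by
  intro u v w
  induction w with
  | @nil u =>
    intro hn k h1 h2
    cases u with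
    | none => simp at hn
    | some c => exact ⟨c, by simp, by simp [rng] at h1 h2; omega⟩
  | @cons u x v hadj q ih =>
    intro hn k h1 h2
    simp only [SimpleGraph.Walk.support_cons, List.mem_cons] at hn
    push_neg at hn
    obtain ⟨hu, hq⟩ := hn
    cases u with
    | none => exact absurd rfl hu
    | some a =>
      cases x with
      | none => exact absurd (SimpleGraph.Walk.start_mem_support q) hq
      | some c =>
        have hd := adj_rng hle hadj
        by_cases hk : k = a.2.val
        · exact ⟨a, by simp, hk.symm⟩
        · obtain ⟨c', hc1, hc2⟩ := ih hq k (by simp [rng] at h1 h2 ⊢; omega)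
            (by simp [rng] at h1 h2 ⊢; omega)
          exact ⟨c', by simp [hc1], hc2⟩

lemma prefix_getVert_one {V : Type*} [DecidableEq V] {G : SimpleGraph V} {u v w : V} (p : G.Walk u v)
    (h : w ∈ p.support) (hw : w ≠ u) : (p.takeUntil w h).getVert 1 = p.getVert 1 := by
  conv_rhs => rw [← p.take_spec h]
  rw [SimpleGraph.Walk.getVert_append]
  have hne : (p.takeUntil w h).length ≠ 0 := fun h0 =>
    hw (SimpleGraph.Walk.eq_of_length_eq_zero h0).symm
  by_cases hlt : 1 < (p.takeUntil w h).length
  · rw [if_pos hlt]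
  · rw [if_neg hlt]
    have hlen : (p.takeUntil w h).length = 1 := by omega
    have h1 : 1 - (p.takeUntil w h).length = 0 := by omega
    rw [h1, SimpleGraph.Walk.getVert_zero]
    conv_lhs => rw [← hlen]
    exact SimpleGraph.Walk.getVert_length _

lemma path_append {V : Type*} {G : SimpleGraph V} {u v w : V} {p : G.Walk u v}
    {q : G.Walk v w} (hp : p.IsPath) (hq : q.IsPath)
    (h : ∀ z, z ∈ p.support → z ∈ q.support → z = v) : (p.append q).IsPath := by
  have hqn := hq.support_nodup
  rw [q.support_eq_cons, List.nodup_cons] at hqn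
  rw [SimpleGraph.Walk.isPath_def, SimpleGraph.Walk.support_append, List.nodup_append]
  refine ⟨hp.support_nodup, hqn.2, ?_⟩
  intro z hz z' hz' hzz'
  rw [← hzz'] at hz'
  have hzq : z ∈ q.support := List.mem_of_mem_tail hz'
  have hzv := h z hz hzq
  subst hzv
  exact hqn.1 hz'

/-- Every spanning tree `T` of the cylindrical graph with sink `G^s_{n,m}`
contains an `s`-rooted trunk: a simple path contained in `T` passing through the sink `s`
(= `none`) and intersecting every ring `R_k`. -/
theorem spanningTree_contains_sRooted_trunk (n m : ℕ) (hn : 3 ≤ n) (hm : 2 ≤ m)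
    (T : SimpleGraph (CylSV n m)) (hT : IsSpanningTree (cylSink n m) T) :
    ∃ (u w : CylSV n m) (p : T.Walk u w), p.IsPath ∧ (none : CylSV n m) ∈ p.support ∧
      ∀ k : Fin m, ∃ i : Fin n, (some (i, k) : CylSV n m) ∈ p.support := by
  classical
  obtain ⟨hle, htree⟩ := hT
  -- chosen tree paths from the sink to every cylinder vertex
  have hpath : ∀ v : CylV n m, ∃ p : T.Walk none (some v), p.IsPath := fun v =>
    ⟨(htree.existsUnique_path none (some v)).choose,
      (htree.existsUnique_path none (some v)).choose_spec.1⟩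
  choose P hP using hpath
  -- the second vertex of each chosen path, together with its boundary ring constraint
  have hgex : ∀ v : CylV n m, ∃ c : CylV n m,
      (P v).getVert 1 = some c ∧ (c.2.val = 0 ∨ c.2.val = m - 1) := by
    intro v
    have hlen : (P v).length ≠ 0 := fun h0 => by
      have := SimpleGraph.Walk.eq_of_length_eq_zero (p := P v) h0
      simp at this
    have hadj : T.Adj ((P v).getVert 0) ((P v).getVert 1) :=
      (P v).adj_getVert_succ (by omega)
    rw [SimpleGraph.Walk.getVert_zero] at hadj
    cases hx : (P v).getVert 1 with
    | none => rw [hx] at hadj; exact absurd rfl hadj.ne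
    | some c => exact ⟨c, rfl, adj_none hle (hx ▸ hadj)⟩
  choose g hg1 hg2 using hgex
  -- ring coverage of the chosen paths
  have cover : ∀ (v : CylV n m) (k : ℕ), min (g v).2.val v.2.val ≤ k →
      k ≤ max (g v).2.val v.2.val →
      ∃ c : CylV n m, some c ∈ (P v).support ∧ c.2.val = k := by
    intro v k hk1 hk2
    obtain ⟨x, hadj, q, hq⟩ :=
      SimpleGraph.Walk.exists_eq_cons_of_ne (by simp) (P v)
    have hx : x = some (g v) := by
      have := hg1 v
      rw [hq] at this
      simpa [SimpleGraph.Walk.getVert_cons_succ] using this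
    subst hx
    have hnone : (none : CylSV n m) ∉ q.support := by
      have := (hP v).support_nodup
      rw [hq, SimpleGraph.Walk.support_cons, List.nodup_cons] at this
      exact this.1
    obtain ⟨c, hc, hck⟩ := ivt hle q hnone k (by simpa [rng] using hk1)
      (by simpa [rng] using hk2)
    exact ⟨c, by rw [hq, SimpleGraph.Walk.support_cons]; exact List.mem_cons_of_mem _ hc, hck⟩
  have coverF : ∀ (v : CylV n m) (k : Fin m), min (g v).2.val v.2.val ≤ k.val →
      k.val ≤ max (g v).2.val v.2.val →
      ∃ i : Fin n, (some (i, k) : CylSV n m) ∈ (P v).support := by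
    intro v k h1 h2
    obtain ⟨⟨i, j⟩, hc, hck⟩ := cover v k.val h1 h2
    have : j = k := Fin.ext hck
    subst this
    exact ⟨i, hc⟩
  -- two paths with distinct second vertices meet only at the sink
  have sep : ∀ a b : CylV n m, g a ≠ g b → ∀ z, z ∈ (P a).support → z ∈ (P b).support →
      z = none := by
    intro a b hab z hza hzb
    by_contra hz
    have hta := (hP a).takeUntil hza
    have htb := (hP b).takeUntil hzb
    obtain ⟨p0, -, hu0⟩ := htree.existsUnique_path none z
    have he : (P a).takeUntil z hza = (P b).takeUntil z hzb :=
      (hu0 _ hta).trans (hu0 _ htb).symm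
    have h1 := prefix_getVert_one (P a) hza hz
    have h2 := prefix_getVert_one (P b) hzb hz
    have : (P a).getVert 1 = (P b).getVert 1 := by rw [← h1, ← h2, he]
    rw [hg1 a, hg1 b] at this
    exact hab (Option.some_injective _ this)
  by_cases hS : ∃ a : CylV n m, (g a).2.val = 0
  · set S : Finset (CylV n m) := Finset.univ.filter (fun v => (g v).2.val = 0) with hSdef
    have hSne : S.Nonempty := ⟨hS.choose, by simp [hSdef, hS.choose_spec]⟩
    obtain ⟨a, haS, haM⟩ := Finset.exists_mem_eq_sup S hSne (fun v => v.2.val)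
    have haS' : (g a).2.val = 0 := by simpa [hSdef] using haS
    by_cases hM : S.sup (fun v => v.2.val) + 1 < m
    · -- combine a bottom path with a top path through a high ring
      set c : CylV n m := (⟨0, by omega⟩, ⟨S.sup (fun v => v.2.val) + 1, hM⟩) with hcdef
      have hcS : (g c).2.val ≠ 0 := by
        intro h0
        have hmem : c ∈ S := by simp [hSdef, h0]
        have h2 : c.2.val ≤ S.sup (fun v : CylV n m => v.2.val) :=
          Finset.le_sup (f := fun v : CylV n m => v.2.val) hmem
        have h3 : c.2.val = S.sup (fun v => v.2.val) + 1 := rfl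
        omega
      have hc2 : (g c).2.val = m - 1 := (hg2 c).resolve_left hcS
      have hgne : g a ≠ g c := fun h => by rw [h, hc2] at haS'; omega
      refine ⟨some a, some c, (P a).reverse.append (P c), ?_, ?_, ?_⟩
      · apply path_append (hP a).reverse (hP c)
        intro z hz1 hz2
        rw [SimpleGraph.Walk.support_reverse, List.mem_reverse] at hz1
        exact sep a c hgne z hz1 hz2
      · rw [SimpleGraph.Walk.mem_support_append_iff]
        exact Or.inr (P c).start_mem_support
      · intro k
        by_cases hk : k.val ≤ S.sup (fun v => v.2.val)
        · obtain ⟨i, hi⟩ := coverF a k (by omega) (by omega)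
          refine ⟨i, ?_⟩
          rw [SimpleGraph.Walk.mem_support_append_iff]
          exact Or.inl (by rw [SimpleGraph.Walk.support_reverse, List.mem_reverse]; exact hi)
        · have hkm : k.val < m := k.isLt
          have hcv : c.2.val = S.sup (fun v => v.2.val) + 1 := rfl
          obtain ⟨i, hi⟩ := coverF c k (by omega) (by omega)
          exact ⟨i, by rw [SimpleGraph.Walk.mem_support_append_iff]; exact Or.inr hi⟩
    · -- the bottom path already reaches the top ring
      refine ⟨none, some a, P a, hP a, (P a).start_mem_support, ?_⟩
      intro k
      have hkm : k.val < m := k.isLt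
      have hav : a.2.val = S.sup (fun v => v.2.val) := haM.symm
      exact coverF a k (by omega) (by omega)
  · -- every path leaves the sink through the top ring
    push_neg at hS
    set v0 : CylV n m := (⟨0, by omega⟩, ⟨0, by omega⟩) with hv0def
    have h0 : (g v0).2.val = m - 1 := (hg2 v0).resolve_left (hS v0)
    refine ⟨none, some v0, P v0, hP v0, (P v0).start_mem_support, ?_⟩
    intro k
    have hkm : k.val < m := k.isLt
    have hv0v : v0.2.val = 0 := rfl
    exact coverF v0 k (by omega) (by omega)
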